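/- arXiv:1803.02767 — 2 statements merged into one kernel-verified Lean document; each statement's English description precedes it below -/
import Mathlib

section
/- Let r ∈ [0,1) and μ ∈ ℝ. There exists a nonzero v ∈ Ĥ_0 with μ·𝔅_r(v') = v almost everywhere on (−π,π) if and only if μ = μ_n(r) for some integer n ≥ 1; and for μ = μ_n(r) the set of solutions v ∈ Ĥ_0 of μ·𝔅_r(v') = v is exactly the one-dimensional space {c·cos(n·) : c ∈ ℝ}. (Thus the null-space of the linearisation μ𝔅_r(d/dt) − I on Ĥ_0 is one-dimensional at each bifurcation point μ_n(r) and trivial otherwise.) -/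
open MeasureTheory Real Set Filter Topology

noncomputable section

/-- Lebesgue measure restricted to the interval `(-π, π)`. -/
def muPi : Measure ℝ := volume.restrict (Set.Ioo (-Real.pi) Real.pi)

/-- The (unnormalised) `n`-th cosine Fourier coefficient of `f` over `(-π, π)`. -/
def cosCoef (f : ℝ → ℝ) (n : ℕ) : ℝ := ∫ t in (-Real.pi)..Real.pi, f t * Real.cos (n * t)

/-- The (unnormalised) `n`-th sine Fourier coefficient of `f` over `(-π, π)`. -/
def sinCoef (f : ℝ → ℝ) (n : ℕ) : ℝ := ∫ t in (-Real.pi)..Real.pi, f t * Real.sin (n * t)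

/-- The `n`-th Fourier multiplier `(1 + r^(2n))/(1 - r^(2n))` of the operator `𝔅_r`. -/
def brMult (r : ℝ) (n : ℕ) : ℝ := (1 + r ^ (2 * n)) / (1 - r ^ (2 * n))

/-- `IsBr r f g` says that `g` represents (as an element of `L²(-π,π)`) the image `𝔅_r f`
of `f` under the operator `𝔅_r`, defined by `𝔅_r (cos n t) = ((1+r^(2n))/(1-r^(2n))) sin n t`
for `n ≥ 1`, `𝔅_r (const) = 0` and `𝔅_r (sin n t) = -((1+r^(2n))/(1-r^(2n))) cos n t` for
`n ≥ 1`; an element of `L²(-π,π)` is uniquely determined (a.e.) by its Fourier coefficients. -/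
def IsBr (r : ℝ) (f g : ℝ → ℝ) : Prop :=
  MeasureTheory.MemLp g 2 muPi ∧ cosCoef g 0 = 0 ∧
  (∀ n : ℕ, 1 ≤ n → cosCoef g n = -(brMult r n) * sinCoef f n) ∧
  (∀ n : ℕ, 1 ≤ n → sinCoef g n = brMult r n * cosCoef f n)

/-- `InH0 v v'` says that the pair `(v, v')` is an element of the space `Ĥ₀`: `v` is an even,
`2π`-periodic, absolutely continuous real function whose weak derivative `v'` (also regarded
as `2π`-periodic) belongs to `L²(-π,π)`. -/
def InH0 (v v' : ℝ → ℝ) : Prop :=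
  (∀ t, v (-t) = v t) ∧ Function.Periodic v (2 * Real.pi) ∧
  Function.Periodic v' (2 * Real.pi) ∧
  MeasureTheory.MemLp v' 2 muPi ∧
  (∀ a b : ℝ, IntervalIntegrable v' MeasureTheory.volume a b) ∧
  (∀ a b : ℝ, v b - v a = ∫ t in a..b, v' t)

/-- The characteristic values `μ_n(r) = (1 - r^(2n))/(n (1 + r^(2n)))`. -/
def muN (r : ℝ) (n : ℕ) : ℝ := (1 - r ^ (2 * n)) / (n * (1 + r ^ (2 * n)))

/-- The `Ĥ₀`-norm of a pair `(v, v')`. -/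
def H0norm (v v' : ℝ → ℝ) : ℝ := Real.sqrt (∫ t in (-Real.pi)..Real.pi, (v t) ^ 2 + (v' t) ^ 2)

/-!
Integration by parts shows that for `v ∈ Ĥ₀` (even, so without sine coefficients) the function
`𝔅_r(v')` has vanishing sine coefficients and `n`-th cosine coefficient
`n (1 + r^(2n)) / (1 - r^(2n))` times that of `v`. By Parseval's identity an `L²` function on
`(-π, π)` is determined by its Fourier coefficients, so `μ 𝔅_r(v') = v` holds iff every nonzero
cosine coefficient of `v` sits at an index `n ≥ 1` with `μ = μ_n(r)`. As `n ↦ μ_n(r)` is strictly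
decreasing, for `μ = μ_n(r)` only the `n`-th coefficient survives, and the continuous periodic
function `v` is a multiple of `cos (n ·)`.
-/

theorem two_mul_pow_le_pow_add_pow {q : ℝ} (hq : 0 ≤ q) {i j n : ℕ} (h : i + j = 2 * n) :
    2 * q ^ n ≤ q ^ i + q ^ j := by
  have hprod : q ^ i * q ^ j = q ^ n * q ^ n := by rw [← pow_add, ← pow_add, h, two_mul]
  have := pow_nonneg hq i
  have := pow_nonneg hq j
  have := pow_nonneg hq n
  nlinarith [sq_nonneg (q ^ i - q ^ j), sq_nonneg (q ^ i + q ^ j - 2 * q ^ n)]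

theorem mul_pow_lt_geom_sum {q : ℝ} (hq₀ : 0 ≤ q) (hq₁ : q < 1) {n : ℕ} (hn : n ≠ 0) :
    (2 * n + 1) * q ^ n < ∑ j ∈ Finset.range (2 * n + 1), q ^ j := by
  have hpair : ∑ j ∈ Finset.range (2 * n + 1), 2 * q ^ n
      < ∑ j ∈ Finset.range (2 * n + 1), (q ^ j + q ^ (2 * n - j)) := by
    refine Finset.sum_lt_sum (fun j hj => two_mul_pow_le_pow_add_pow hq₀ ?_) ⟨0, by simp, ?_⟩
    · have := Finset.mem_range.1 hj
      omega
    · have hqn : q ^ n < 1 := pow_lt_one₀ hq₀ hq₁ hn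
      have hsq : q ^ (2 * n) = q ^ n * q ^ n := by rw [two_mul, pow_add]
      rw [pow_zero, Nat.sub_zero, hsq]
      nlinarith
  have hreflect : ∑ j ∈ Finset.range (2 * n + 1), q ^ (2 * n - j)
      = ∑ j ∈ Finset.range (2 * n + 1), q ^ j :=
    Finset.sum_range_reflect (fun j => q ^ j) (2 * n + 1)
  rw [Finset.sum_add_distrib, hreflect, Finset.sum_const,
    Finset.card_range, nsmul_eq_mul] at hpair
  push_cast at hpair
  linarith

theorem muN_succ_lt {r : ℝ} (hr : |r| < 1) {n : ℕ} (hn : n ≠ 0) : muN r (n + 1) < muN r n := by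
  set q := r ^ 2
  have hq₀ : 0 ≤ q := sq_nonneg r
  have hq₁ : q < 1 := (sq_lt_one_iff_abs_lt_one r).2 hr
  have hqn : q ^ n < 1 := pow_lt_one₀ hq₀ hq₁ hn
  have hgeom : 1 - q ^ (2 * n + 1) = (1 - q) * ∑ j ∈ Finset.range (2 * n + 1), q ^ j := by
    linear_combination geom_sum_mul q (2 * n + 1)
  have hsplit : q ^ (2 * n + 1) = q ^ n * q ^ n * q := by rw [pow_succ, two_mul, pow_add]
  rw [muN, muN, pow_mul, pow_mul, pow_succ, div_lt_div_iff₀ (by positivity) (by positivity)]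
  push_cast
  -- with `q = r²`, the cross-multiplied claim is `(1 - q) (∑_{j ≤ 2n} q^j - (2n + 1) q^n) > 0`
  nlinarith [mul_lt_mul_of_pos_left (mul_pow_lt_geom_sum hq₀ hq₁ hn) (by linarith : 0 < 1 - q)]

theorem muN_injOn {r : ℝ} (hr : |r| < 1) : Set.InjOn (muN r) {n | n ≠ 0} := by
  have hanti : StrictAnti fun k => muN r (k + 1) :=
    strictAnti_nat_of_succ_lt fun k => muN_succ_lt hr k.succ_ne_zero
  intro m (hm : m ≠ 0) n (hn : n ≠ 0) h
  have h' : muN r (m - 1 + 1) = muN r (n - 1 + 1) := by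
    rwa [Nat.sub_add_cancel (Nat.one_le_iff_ne_zero.2 hm),
      Nat.sub_add_cancel (Nat.one_le_iff_ne_zero.2 hn)]
  have := hanti.injective h'
  omega

theorem muN_mul_natCast_mul_brMult {r : ℝ} (hr : |r| < 1) {n : ℕ} (hn : n ≠ 0) :
    muN r n * (n * brMult r n) = 1 := by
  have hρ : r ^ (2 * n) < 1 := by
    rw [pow_mul]
    exact pow_lt_one₀ (sq_nonneg r) ((sq_lt_one_iff_abs_lt_one r).2 hr) hn
  have hρ₀ : 0 ≤ r ^ (2 * n) := by
    rw [pow_mul]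
    positivity
  have : (1 : ℝ) - r ^ (2 * n) ≠ 0 := by linarith
  have : (1 : ℝ) + r ^ (2 * n) ≠ 0 := by linarith
  rw [muN, brMult]
  field_simp

theorem mul_natCast_mul_brMult_eq_one_iff {r : ℝ} (hr : |r| < 1) (μ : ℝ) (n : ℕ) :
    μ * (n * brMult r n) = 1 ↔ n ≠ 0 ∧ μ = muN r n := by
  rcases eq_or_ne n 0 with rfl | hn
  · simp
  have h := muN_mul_natCast_mul_brMult hr hn
  refine ⟨fun hμ => ⟨hn, mul_right_cancel₀ (right_ne_zero_of_mul_eq_one h) (hμ.trans h.symm)⟩, ?_⟩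
  rintro ⟨-, rfl⟩
  exact h

theorem cosCoef_const_mul (c : ℝ) (f : ℝ → ℝ) (m : ℕ) :
    cosCoef (fun t => c * f t) m = c * cosCoef f m := by
  simp only [cosCoef, mul_assoc, intervalIntegral.integral_const_mul]

theorem sinCoef_const_mul (c : ℝ) (f : ℝ → ℝ) (m : ℕ) :
    sinCoef (fun t => c * f t) m = c * sinCoef f m := by
  simp only [sinCoef, mul_assoc, intervalIntegral.integral_const_mul]

theorem sinCoef_eq_zero_of_even {f : ℝ → ℝ} (hf : ∀ t, f (-t) = f t) (m : ℕ) :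
    sinCoef f m = 0 := by
  have h := intervalIntegral.integral_comp_neg (a := -π) (b := π) fun t => f t * sin (m * t)
  simp only [neg_neg, hf, mul_neg, sin_neg, intervalIntegral.integral_neg] at h
  rw [sinCoef]
  linarith

theorem integral_cos_intCast_mul_eq_zero {k : ℤ} (hk : k ≠ 0) :
    ∫ t in (-π)..π, cos (k * t) = 0 := by
  rw [intervalIntegral.integral_comp_mul_left (fun t => cos t) (Int.cast_ne_zero.2 hk),
    integral_cos, mul_neg, sin_neg, sin_int_mul_pi]
  simp

theorem integral_cos_mul_cos {m n : ℕ} (hn : n ≠ 0) :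
    ∫ t in (-π)..π, cos (m * t) * cos (n * t) = if m = n then π else 0 := by
  have hprod : ∀ t : ℝ, cos (m * t) * cos (n * t)
      = (cos (((m - n : ℤ) : ℝ) * t) + cos (((m + n : ℤ) : ℝ) * t)) / 2 := fun t => by
    push_cast
    rw [sub_mul, add_mul, cos_sub, cos_add]
    ring
  have hint : ∀ k : ℤ, IntervalIntegrable (fun t : ℝ => cos (k * t)) volume (-π) π :=
    fun k => (continuous_cos.comp (continuous_const_mul _)).intervalIntegrable _ _
  simp_rw [hprod]
  rw [intervalIntegral.integral_div, intervalIntegral.integral_add (hint _) (hint _),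
    integral_cos_intCast_mul_eq_zero (k := m + n) (by omega)]
  split_ifs with hmn
  · subst hmn
    simp
  · rw [integral_cos_intCast_mul_eq_zero (by omega)]
    simp

theorem cosCoef_cos {n : ℕ} (hn : n ≠ 0) (m : ℕ) :
    cosCoef (fun t => cos (n * t)) m = if m = n then π else 0 := by
  simp_rw [cosCoef, mul_comm (cos (n * _))]
  exact integral_cos_mul_cos hn

instance : IsFiniteMeasure muPi := by
  rw [muPi]
  infer_instance

theorem muPi_eq_restrict_Ioc : muPi = volume.restrict (Ioc (-π) π) :=
  Measure.restrict_congr_set Ioo_ae_eq_Ioc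

theorem Continuous.memLp_muPi {f : ℝ → ℝ} (hf : Continuous f) : MemLp f 2 muPi := by
  obtain ⟨C, hC⟩ := (isCompact_Icc (a := -π) (b := π)).exists_bound_of_continuousOn hf.continuousOn
  refine MemLp.of_bound hf.aestronglyMeasurable C ?_
  rw [muPi, ae_restrict_iff' measurableSet_Ioo]
  exact ae_of_all _ fun t ht => hC t (Ioo_subset_Icc_self ht)

theorem intervalIntegrable_of_memLp_muPi {f : ℝ → ℝ} (hf : MemLp f 2 muPi) :
    IntervalIntegrable f volume (-π) π := by
  rw [intervalIntegrable_iff_integrableOn_Ioc_of_le (by linarith [pi_pos]), IntegrableOn,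
    ← muPi_eq_restrict_Ioc]
  exact hf.integrable one_le_two

theorem intervalIntegrable_mul_of_memLp_muPi {f ψ : ℝ → ℝ} (hf : MemLp f 2 muPi)
    (hψ : Continuous ψ) : IntervalIntegrable (fun t => f t * ψ t) volume (-π) π :=
  (intervalIntegrable_of_memLp_muPi hf).mul_continuousOn hψ.continuousOn

theorem cosCoef_sub {f h : ℝ → ℝ} (hf : MemLp f 2 muPi) (hh : MemLp h 2 muPi) (m : ℕ) :
    cosCoef (f - h) m = cosCoef f m - cosCoef h m := by
  simp only [cosCoef, Pi.sub_apply, sub_mul]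
  exact intervalIntegral.integral_sub (intervalIntegrable_mul_of_memLp_muPi hf (by fun_prop))
    (intervalIntegrable_mul_of_memLp_muPi hh (by fun_prop))

theorem sinCoef_sub {f h : ℝ → ℝ} (hf : MemLp f 2 muPi) (hh : MemLp h 2 muPi) (m : ℕ) :
    sinCoef (f - h) m = sinCoef f m - sinCoef h m := by
  simp only [sinCoef, Pi.sub_apply, sub_mul]
  exact intervalIntegral.integral_sub (intervalIntegrable_mul_of_memLp_muPi hf (by fun_prop))
    (intervalIntegrable_mul_of_memLp_muPi hh (by fun_prop))

theorem cosCoef_congr_ae {f h : ℝ → ℝ} (hfh : f =ᵐ[muPi] h) (m : ℕ) :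
    cosCoef f m = cosCoef h m := by
  rw [muPi_eq_restrict_Ioc, EventuallyEq, ae_restrict_iff' measurableSet_Ioc] at hfh
  refine intervalIntegral.integral_congr_ae (hfh.mono fun t ht hmem => ?_)
  rw [uIoc_of_le (by linarith [pi_pos])] at hmem
  rw [ht hmem]

theorem integral_mul_cos_sin_intCast_eq_zero {f : ℝ → ℝ} (hc : ∀ m : ℕ, cosCoef f m = 0)
    (hs : ∀ m : ℕ, sinCoef f m = 0) (k : ℤ) :
    (∫ t in (-π)..π, f t * cos (k * t)) = 0 ∧ ∫ t in (-π)..π, f t * sin (k * t) = 0 := by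
  obtain ⟨m, rfl | rfl⟩ := Int.eq_nat_or_neg k
  · exact ⟨hc m, hs m⟩
  · simp only [Int.cast_neg, Int.cast_natCast, neg_mul, cos_neg, sin_neg, mul_neg,
      intervalIntegral.integral_neg, neg_eq_zero]
    exact ⟨hc m, hs m⟩

theorem fourier_neg_smul_ofReal (f : ℝ → ℝ) (n : ℤ) (x : ℝ) :
    fourier (-n) (x : AddCircle (π - -π)) • (f x : ℂ)
      = ((f x * cos (n * x) : ℝ) : ℂ) - ((f x * sin (n * x) : ℝ) : ℂ) * Complex.I := by
  rw [fourier_coe_apply, smul_eq_mul]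
  have harg : 2 * (π : ℂ) * Complex.I * ((-n : ℤ) : ℂ) * (x : ℂ) / ((π - -π : ℝ) : ℂ)
      = ((-(n * x) : ℝ) : ℂ) * Complex.I := by
    have : (π : ℂ) ≠ 0 := Complex.ofReal_ne_zero.2 pi_ne_zero
    push_cast
    field_simp
    ring
  rw [harg, Complex.exp_mul_I, ← Complex.ofReal_cos, ← Complex.ofReal_sin, cos_neg, sin_neg]
  push_cast
  ring

theorem ae_eq_zero_of_cosCoef_sinCoef_eq_zero {f : ℝ → ℝ} (hf : MemLp f 2 muPi)
    (hc : ∀ m : ℕ, cosCoef f m = 0) (hs : ∀ m : ℕ, sinCoef f m = 0) : f =ᵐ[muPi] 0 := by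
  have hab : -π < π := by linarith [pi_pos]
  have hF : MemLp (fun t => (f t : ℂ)) 2 (volume.restrict (Ioc (-π) π)) :=
    muPi_eq_restrict_Ioc ▸ hf.ofReal
  have hcoef : ∀ n : ℤ, fourierCoeffOn hab (fun t => (f t : ℂ)) n = 0 := fun n => by
    have hcs : ∀ ψ : ℝ → ℝ, Continuous ψ →
        IntervalIntegrable (fun t => ((f t * ψ t : ℝ) : ℂ)) volume (-π) π := fun ψ hψ =>
      have h := intervalIntegrable_mul_of_memLp_muPi hf hψ
      ⟨h.1.ofReal, h.2.ofReal⟩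
    obtain ⟨hcos, hsin⟩ := integral_mul_cos_sin_intCast_eq_zero hc hs n
    rw [fourierCoeffOn_eq_integral]
    simp_rw [fourier_neg_smul_ofReal]
    rw [intervalIntegral.integral_sub (hcs _ (by fun_prop)) ((hcs _ (by fun_prop)).mul_const _),
      intervalIntegral.integral_mul_const, intervalIntegral.integral_ofReal,
      intervalIntegral.integral_ofReal, hcos, hsin]
    simp
  have hsum : HasSum (fun n : ℤ => ‖fourierCoeffOn hab (fun t => (f t : ℂ)) n‖ ^ 2) 0 := by
    simp [hcoef, hasSum_zero]
  have hsq : ∫ t, f t ^ 2 ∂muPi = 0 := by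
    simpa [muPi_eq_restrict_Ioc, intervalIntegral.integral_of_le hab.le, pi_ne_zero]
      using (hasSum_sq_fourierCoeffOn hab hF).unique hsum
  filter_upwards [(integral_eq_zero_iff_of_nonneg (fun t => sq_nonneg (f t)) hf.integrable_sq).1
    hsq] with t ht
  exact pow_eq_zero_iff two_ne_zero |>.1 ht

theorem ae_eq_of_cosCoef_eq_of_sinCoef_eq {f h : ℝ → ℝ} (hf : MemLp f 2 muPi)
    (hh : MemLp h 2 muPi) (hc : ∀ m : ℕ, cosCoef f m = cosCoef h m)
    (hs : ∀ m : ℕ, sinCoef f m = sinCoef h m) : f =ᵐ[muPi] h := by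
  have hzero := ae_eq_zero_of_cosCoef_sinCoef_eq_zero (hf.sub hh)
    (fun m => by rw [cosCoef_sub hf hh, hc, sub_self])
    (fun m => by rw [sinCoef_sub hf hh, hs, sub_self])
  exact hzero.mono fun t ht => sub_eq_zero.1 ht

theorem eq_of_cosCoef_eq_of_sinCoef_eq {v w : ℝ → ℝ} (hv : Continuous v) (hw : Continuous w)
    (hpv : Function.Periodic v (2 * π)) (hpw : Function.Periodic w (2 * π))
    (hc : ∀ m : ℕ, cosCoef v m = cosCoef w m) (hs : ∀ m : ℕ, sinCoef v m = sinCoef w m) :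
    v = w := by
  have hae : v =ᵐ[volume.restrict (Icc (-π) π)] w := by
    rw [← Measure.restrict_congr_set Ioo_ae_eq_Icc]
    exact ae_eq_of_cosCoef_eq_of_sinCoef_eq hv.memLp_muPi hw.memLp_muPi hc hs
  have hIcc : EqOn v w (Icc (-π) π) := Measure.eqOn_of_ae_eq hae hv.continuousOn
    hw.continuousOn (by rw [interior_Icc, closure_Ioo (by linarith [pi_pos])])
  funext t
  obtain ⟨y, hy, hty⟩ := (hpv.sub hpw).exists_mem_Ico two_pi_pos t (-π)
  have hy' : y ∈ Icc (-π) π := ⟨hy.1, by linarith [hy.2]⟩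
  simpa [sub_eq_zero, hIcc hy'] using hty

theorem integral_mul_eq_sub_of_eq_primitive {v v' g g' : ℝ → ℝ} {a b : ℝ}
    (hv' : IntervalIntegrable v' volume a b) (hv : ∀ x, v x = v a + ∫ t in a..x, v' t)
    (hg : ∀ x, HasDerivAt g (g' x) x) (hg' : Continuous g') :
    ∫ x in a..b, v' x * g x = v b * g b - v a * g a - ∫ x in a..b, v x * g' x := by
  have hv_eq : v = fun x => v a + ∫ t in a..x, v' t := funext hv
  have hvAC : AbsolutelyContinuousOnInterval v a b := by
    rw [hv_eq]
    exact contDiffOn_const.absolutelyContinuousOnInterval.add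
      (hv'.absolutelyContinuousOnInterval_intervalIntegral left_mem_uIcc)
  have hg_deriv : deriv g = g' := funext fun x => (hg x).deriv
  have hgAC : AbsolutelyContinuousOnInterval g a b :=
    (contDiff_one_iff_deriv.2 ⟨fun x => (hg x).differentiableAt, hg_deriv ▸ hg'⟩).contDiffOn
      |>.absolutelyContinuousOnInterval
  have hv_deriv : ∀ᵐ x, x ∈ uIoc a b → deriv v x = v' x := by
    filter_upwards [hv'.ae_hasDerivAt_integral] with x hx hxab
    rw [hv_eq]
    exact ((hx (uIoc_subset_uIcc hxab) a left_mem_uIcc).const_add (v a)).deriv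
  have hparts := hgAC.integral_mul_deriv_eq_deriv_mul hvAC
  rw [hg_deriv, intervalIntegral.integral_congr_ae (hv_deriv.mono fun x hx hxab => by
    rw [hx hxab])] at hparts
  simp only [mul_comm (v' _) (g _), mul_comm (v _) (g' _), hparts]
  ring

namespace InH0

variable {v v' : ℝ → ℝ}

theorem eq_add_integral (h : InH0 v v') (a x : ℝ) : v x = v a + ∫ t in a..x, v' t := by
  linarith [h.2.2.2.2.2 a x]

theorem continuous (h : InH0 v v') : Continuous v := by
  rw [funext (h.eq_add_integral 0)]
  exact continuous_const.add (intervalIntegral.continuous_primitive h.2.2.2.2.1 0)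

theorem sinCoef_deriv (h : InH0 v v') (m : ℕ) : sinCoef v' m = -m * cosCoef v m := by
  have hsin : ∀ x, HasDerivAt (fun t => sin (m * t)) (m * cos (m * x)) x := fun x => by
    simpa [mul_comm] using ((hasDerivAt_id x).const_mul (m : ℝ)).sin
  rw [sinCoef, integral_mul_eq_sub_of_eq_primitive (h.2.2.2.2.1 _ _) (h.eq_add_integral _) hsin
    (by fun_prop), mul_neg, sin_neg, sin_nat_mul_pi]
  simp_rw [mul_left_comm (v _)]
  rw [intervalIntegral.integral_const_mul, ← cosCoef]
  ring

theorem cosCoef_deriv (h : InH0 v v') (m : ℕ) : cosCoef v' m = 0 := by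
  have hcos : ∀ x, HasDerivAt (fun t => cos (m * t)) (-(m * sin (m * x))) x := fun x => by
    simpa [mul_comm] using ((hasDerivAt_id x).const_mul (m : ℝ)).cos
  rw [cosCoef, integral_mul_eq_sub_of_eq_primitive (h.2.2.2.2.1 _ _) (h.eq_add_integral _) hcos
    (by fun_prop), mul_neg, cos_neg, h.1]
  simp_rw [mul_neg, mul_left_comm (v _)]
  rw [intervalIntegral.integral_neg, intervalIntegral.integral_const_mul, ← sinCoef,
    sinCoef_eq_zero_of_even h.1]
  ring

theorem eq_zero_of_cosCoef_eq_zero (h : InH0 v v') (hc : ∀ m : ℕ, cosCoef v m = 0) : v = 0 :=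
  eq_of_cosCoef_eq_of_sinCoef_eq h.continuous continuous_const h.2.1 (fun _ => rfl)
    (fun m => by rw [hc]; simp [cosCoef])
    (fun m => by rw [sinCoef_eq_zero_of_even h.1]; simp [sinCoef])

end InH0

theorem inH0_cos (n : ℕ) : InH0 (fun t => cos (n * t)) (fun t => -(n * sin (n * t))) := by
  have hderiv : ∀ x, HasDerivAt (fun t => cos (n * t)) (-(n * sin (n * x))) x := fun x => by
    simpa [mul_comm] using ((hasDerivAt_id x).const_mul (n : ℝ)).cos
  refine ⟨fun t => by simp only [mul_neg, cos_neg], fun t => ?_, fun t => ?_,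
    Continuous.memLp_muPi (by fun_prop), fun a b => Continuous.intervalIntegrable (by fun_prop) a b,
    fun a b => (intervalIntegral.integral_eq_sub_of_hasDerivAt (fun x _ => hderiv x)
      (Continuous.intervalIntegrable (by fun_prop) a b)).symm⟩
  · simp only [mul_add, cos_add_nat_mul_two_pi]
  · simp only [mul_add, sin_add_nat_mul_two_pi]

theorem InH0.eq_mul_cos_of_cosCoef_eq_zero {v v' : ℝ → ℝ} (h : InH0 v v') {n : ℕ} (hn : n ≠ 0)
    (hc : ∀ m, m ≠ n → cosCoef v m = 0) : v = fun t => cosCoef v n / π * cos (n * t) := by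
  refine eq_of_cosCoef_eq_of_sinCoef_eq h.continuous (by fun_prop) h.2.1
    (fun t => by simp only [mul_add, cos_add_nat_mul_two_pi]) (fun m => ?_) (fun m => ?_)
  · rw [cosCoef_const_mul, cosCoef_cos hn]
    split_ifs with hmn
    · subst hmn
      field_simp [pi_ne_zero]
    · rw [hc m hmn, mul_zero]
  · rw [sinCoef_const_mul, sinCoef_eq_zero_of_even h.1, sinCoef_eq_zero_of_even (inH0_cos n).1,
      mul_zero]

namespace IsBr

variable {r : ℝ} {v v' g : ℝ → ℝ}

theorem cosCoef_eq (hB : IsBr r v' g) (hH : InH0 v v') (m : ℕ) :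
    cosCoef g m = m * brMult r m * cosCoef v m := by
  rcases eq_or_ne m 0 with rfl | hm
  · simp [hB.2.1]
  · rw [hB.2.2.1 m (Nat.one_le_iff_ne_zero.2 hm), hH.sinCoef_deriv]
    ring

theorem sinCoef_eq_zero (hB : IsBr r v' g) (hH : InH0 v v') (m : ℕ) : sinCoef g m = 0 := by
  rcases eq_or_ne m 0 with rfl | hm
  · simp [sinCoef]
  · rw [hB.2.2.2 m (Nat.one_le_iff_ne_zero.2 hm), hH.cosCoef_deriv, mul_zero]

theorem ae_mul_eq_iff (hB : IsBr r v' g) (hH : InH0 v v') (μ : ℝ) :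
    (∀ᵐ t ∂muPi, μ * g t = v t) ↔ ∀ m : ℕ, μ * (m * brMult r m) * cosCoef v m = cosCoef v m := by
  refine ⟨fun h m => ?_, fun h => ?_⟩
  · have hm := cosCoef_congr_ae h m
    rw [cosCoef_const_mul, hB.cosCoef_eq hH] at hm
    linear_combination hm
  · refine ae_eq_of_cosCoef_eq_of_sinCoef_eq (hB.1.const_mul μ) hH.continuous.memLp_muPi
      (fun m => ?_) (fun m => ?_)
    · rw [cosCoef_const_mul, hB.cosCoef_eq hH]
      linear_combination h m
    · rw [sinCoef_const_mul, hB.sinCoef_eq_zero hH, sinCoef_eq_zero_of_even hH.1, mul_zero]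

theorem ae_mul_eq_iff_muN (hr : |r| < 1) (hB : IsBr r v' g) (hH : InH0 v v') (μ : ℝ) :
    (∀ᵐ t ∂muPi, μ * g t = v t) ↔ ∀ m : ℕ, cosCoef v m ≠ 0 → m ≠ 0 ∧ μ = muN r m := by
  rw [hB.ae_mul_eq_iff hH]
  refine forall_congr' fun m => ?_
  rw [← mul_natCast_mul_brMult_eq_one_iff hr]
  refine ⟨fun h hc => mul_right_cancel₀ hc (h.trans (one_mul _).symm), fun h => ?_⟩
  by_cases hc : cosCoef v m = 0
  · rw [hc, mul_zero]
  · rw [h hc, one_mul]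

theorem ae_muN_mul_eq_of_eq_mul_cos {c : ℝ} (hr : |r| < 1) {n : ℕ} (hn : n ≠ 0)
    (hB : IsBr r v' g) (hH : InH0 v v') (hv : ∀ t, v t = c * cos (n * t)) :
    ∀ᵐ t ∂muPi, muN r n * g t = v t := by
  rw [hB.ae_mul_eq_iff_muN hr hH]
  intro m hm
  rw [funext hv, cosCoef_const_mul, cosCoef_cos hn] at hm
  split_ifs at hm with hmn
  · exact ⟨hmn ▸ hn, hmn ▸ rfl⟩
  · exact absurd (mul_zero c) hm

end IsBr

theorem isBr_cos {r : ℝ} {n : ℕ} (hn : n ≠ 0) :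
    IsBr r (fun t => -(n * sin (n * t))) (fun t => n * brMult r n * cos (n * t)) := by
  refine ⟨Continuous.memLp_muPi (by fun_prop), ?_, fun m _ => ?_, fun m _ => ?_⟩
  · rw [cosCoef_const_mul, cosCoef_cos hn, if_neg (Ne.symm hn), mul_zero]
  · rw [(inH0_cos n).sinCoef_deriv, cosCoef_const_mul, cosCoef_cos hn]
    split_ifs with hmn
    · subst hmn
      ring
    · ring
  · rw [(inH0_cos n).cosCoef_deriv, sinCoef_const_mul, sinCoef_eq_zero_of_even (inH0_cos n).1,
      mul_zero, mul_zero]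

/-- **The linearised operator at the bifurcation points.** For `r ∈ [0,1)` and `μ ∈ ℝ`:
a nonzero `v ∈ Ĥ₀` with `μ·𝔅_r(v') = v` a.e. on `(−π,π)` exists iff `μ = μ_n(r)` for some
`n ≥ 1`; and for `μ = μ_n(r)` the set of solutions `v ∈ Ĥ₀` of `μ_n(r)·𝔅_r(v') = v` is exactly
the one-dimensional space `{c·cos(n·) : c ∈ ℝ}`. -/
theorem babenko_linearisation_kernel (r : ℝ) (hr : r ∈ Set.Ico (0 : ℝ) 1) :
    (∀ μ : ℝ,
      ((∃ v v' g : ℝ → ℝ, InH0 v v' ∧ IsBr r v' g ∧ (∃ t : ℝ, v t ≠ 0) ∧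
          ∀ᵐ t ∂muPi, μ * g t = v t)
        ↔ ∃ n : ℕ, 1 ≤ n ∧ μ = muN r n)) ∧
    (∀ n : ℕ, 1 ≤ n → ∀ v v' : ℝ → ℝ, InH0 v v' → ∀ g : ℝ → ℝ, IsBr r v' g →
      ((∀ᵐ t ∂muPi, muN r n * g t = v t) ↔ ∃ c : ℝ, ∀ t : ℝ, v t = c * Real.cos (n * t))) := by
  have hr' : |r| < 1 := abs_lt.2 ⟨by linarith [hr.1], hr.2⟩
  refine ⟨fun μ => ⟨?_, ?_⟩, fun n hn v v' hH g hB => ⟨fun hsol => ?_, ?_⟩⟩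
  · rintro ⟨v, v', g, hH, hB, ⟨t, ht⟩, hsol⟩
    obtain ⟨m, hm⟩ : ∃ m, cosCoef v m ≠ 0 := by
      by_contra! hc
      exact ht (congrFun (hH.eq_zero_of_cosCoef_eq_zero hc) t)
    obtain ⟨hm₀, rfl⟩ := (hB.ae_mul_eq_iff_muN hr' hH μ).1 hsol m hm
    exact ⟨m, Nat.one_le_iff_ne_zero.2 hm₀, rfl⟩
  · rintro ⟨n, hn, rfl⟩
    have hn₀ : n ≠ 0 := Nat.one_le_iff_ne_zero.1 hn
    exact ⟨_, _, _, inH0_cos n, isBr_cos hn₀, ⟨0, by simp⟩,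
      (isBr_cos hn₀).ae_muN_mul_eq_of_eq_mul_cos (c := 1) hr' hn₀ (inH0_cos n) (by simp)⟩
  · have hn₀ : n ≠ 0 := Nat.one_le_iff_ne_zero.1 hn
    refine ⟨cosCoef v n / π, congrFun (hH.eq_mul_cos_of_cosCoef_eq_zero hn₀ fun m hmn => ?_)⟩
    by_contra hm
    obtain ⟨hm₀, hμ⟩ := (hB.ae_mul_eq_iff_muN hr' hH _).1 hsol m hm
    exact hmn (muN_injOn hr' hm₀ hn₀ hμ.symm)
  · rintro ⟨c, hv⟩
    exact hB.ae_muN_mul_eq_of_eq_mul_cos hr' (Nat.one_le_iff_ne_zero.1 hn) hH hv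
end
end

section
/- Let r ∈ [0,1), let a_0 ∈ ℝ and let (a_k)_{k≥1} be real numbers with Σ_{k≥1} k|a_k| < ∞. Define x(t) = −t − Σ_{k=1}^∞ a_k (1+r^{2k}) sin(kt) and η(t) = −a_0 + Σ_{k=1}^∞ a_k (1−r^{2k}) cos(kt). Then ∫_{−π}^{π} η(t) x'(t) dt = 2π a_0 − π Σ_{k=1}^∞ k a_k² (1−r^{4k}); in particular ∫_{−π}^{π} η(t) x'(t) dt = 0 if and only if a_0 = (1/2) Σ_{k=1}^∞ k a_k² (1−r^{4k}). (This is the zero-mean condition for the free-surface profile in terms of the coefficients of the conformal parametrisation.) -/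
open MeasureTheory Real Set Filter Topology

noncomputable section

/-!
Both `η` and `x'` are cosine series whose coefficients are absolutely summable because
`∑ k |a_k| < ∞`; the same summability justifies differentiating the sine series of `x` term by
term. Dominated convergence lets us integrate over `[-π, π]` term by term, and by orthogonality
of the `cos (k t)` only the product of the constant terms and the diagonal products
`a_k (1 - r^(2k)) · k a_k (1 + r^(2k)) · π` survive (a Parseval identity).
-/

theorem intervalIntegral_tsum_eq_tsum_intervalIntegral {E : Type*} [NormedAddCommGroup E]
    [NormedSpace ℝ E] [CompleteSpace E] {f : ℕ → ℝ → E} {u : ℕ → ℝ}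
    (hf : ∀ k, Continuous (f k)) (hu : Summable u) (hfu : ∀ k t, ‖f k t‖ ≤ u k) (a b : ℝ) :
    ∫ t in a..b, ∑' k, f k t = ∑' k, ∫ t in a..b, f k t :=
  (intervalIntegral.hasSum_integral_of_dominated_convergence (fun k _ => u k)
    (fun k => (hf k).aestronglyMeasurable) (fun k => ae_of_all _ fun t _ => hfu k t)
    (ae_of_all _ fun _ _ => hu) intervalIntegrable_const
    (ae_of_all _ fun t _ => (hu.of_norm_bounded (hfu · t)).hasSum)).tsum_eq.symm

theorem integral_cos_int_mul_eq_zero {m : ℤ} (hm : m ≠ 0) :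
    ∫ t in (-π)..π, cos (m * t) = 0 := by
  rw [intervalIntegral.integral_comp_mul_left cos (Int.cast_ne_zero.mpr hm), integral_cos,
    mul_neg, sin_neg, sin_int_mul_pi]
  simp

theorem integral_cos_succ_mul_eq_zero (k : ℕ) : ∫ t in (-π)..π, cos ((k + 1) * t) = 0 := by
  exact_mod_cast integral_cos_int_mul_eq_zero (m := k + 1) (by omega)

theorem integral_cos_succ_mul_mul_cos_succ_mul (m n : ℕ) :
    ∫ t in (-π)..π, cos ((m + 1) * t) * cos ((n + 1) * t) = if m = n then π else 0 := by
  have hprod : ∀ t : ℝ, cos ((m + 1) * t) * cos ((n + 1) * t) =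
      (cos (((m - n : ℤ) : ℝ) * t) + cos (((m + n + 2 : ℤ) : ℝ) * t)) / 2 := by
    intro t
    rw [eq_div_iff two_ne_zero, mul_comm, ← mul_assoc, two_mul_cos_mul_cos]
    push_cast
    ring_nf
  simp_rw [hprod]
  rw [intervalIntegral.integral_div,
    intervalIntegral.integral_add ((by fun_prop : Continuous _).intervalIntegrable _ _)
      ((by fun_prop : Continuous _).intervalIntegrable _ _),
    integral_cos_int_mul_eq_zero (m := m + n + 2) (by omega)]
  split_ifs with h
  · subst h
    simp only [sub_self, Int.cast_zero, zero_mul, cos_zero, intervalIntegral.integral_const,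
      smul_eq_mul, mul_one, add_zero]
    ring
  · rw [integral_cos_int_mul_eq_zero (by omega)]
    simp

-- In both series `b k` is the coefficient of the frequency `k + 1`.
def cosSeries (b : ℕ → ℝ) (t : ℝ) : ℝ := ∑' k, b k * cos ((k + 1) * t)

def sinSeries (b : ℕ → ℝ) (t : ℝ) : ℝ := ∑' k, b k * sin ((k + 1) * t)

theorem norm_mul_cos_le (b θ : ℝ) : ‖b * cos θ‖ ≤ |b| := by
  rw [norm_mul, norm_eq_abs, norm_eq_abs]
  exact mul_le_of_le_one_right (abs_nonneg b) (abs_cos_le_one θ)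

theorem cosSeries_neg (b : ℕ → ℝ) (t : ℝ) : cosSeries (-b) t = -cosSeries b t := by
  simp only [cosSeries, Pi.neg_apply, neg_mul, tsum_neg]

theorem hasDerivAt_sinSeries {b : ℕ → ℝ} (hb : Summable fun k : ℕ => ((k : ℝ) + 1) * |b k|)
    (t : ℝ) : HasDerivAt (sinSeries b) (cosSeries (fun k : ℕ => ((k : ℝ) + 1) * b k) t) t := by
  refine hasDerivAt_tsum (g := fun k s => b k * sin ((k + 1) * s))
    (g' := fun k s => ((k : ℝ) + 1) * b k * cos ((k + 1) * s)) (y₀ := 0) hb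
    (fun k s => ?_) (fun k s => ?_) ?_ t
  · refine ((((hasDerivAt_id s).const_mul ((k : ℝ) + 1)).sin).const_mul (b k)).congr_deriv ?_
    simp only [id, mul_one]
    ring
  · refine (norm_mul_cos_le _ _).trans_eq ?_
    rw [abs_mul, abs_of_nonneg (k.cast_add_one_pos (α := ℝ)).le]
  · simp only [mul_zero, sin_zero]
    exact summable_zero

section CosSeries

variable {b c : ℕ → ℝ}

theorem continuous_cosSeries (hb : Summable fun k => |b k|) : Continuous (cosSeries b) :=
  continuous_tsum (fun _ => by fun_prop) hb fun k t => norm_mul_cos_le _ _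

theorem norm_cosSeries_le (hb : Summable fun k => |b k|) (t : ℝ) :
    ‖cosSeries b t‖ ≤ ∑' k, |b k| :=
  tsum_of_norm_bounded hb.hasSum fun _ => norm_mul_cos_le _ _

theorem integral_cosSeries (hb : Summable fun k => |b k|) :
    ∫ t in (-π)..π, cosSeries b t = 0 := by
  simp only [cosSeries]
  rw [intervalIntegral_tsum_eq_tsum_intervalIntegral (fun _ => by fun_prop) hb
    (fun k t => norm_mul_cos_le _ _)]
  simp [integral_cos_succ_mul_eq_zero]

theorem integral_cos_succ_mul_mul_cosSeries (hc : Summable fun k => |c k|) (k : ℕ) :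
    ∫ t in (-π)..π, cos ((k + 1) * t) * cosSeries c t = π * c k := by
  have hbound : ∀ j t, ‖c j * (cos ((k + 1) * t) * cos ((j + 1) * t))‖ ≤ |c j| := fun j t => by
    rw [norm_mul, norm_eq_abs]
    refine mul_le_of_le_one_right (abs_nonneg _) ?_
    rw [norm_mul, norm_eq_abs, norm_eq_abs]
    exact mul_le_one₀ (abs_cos_le_one _) (abs_nonneg _) (abs_cos_le_one _)
  simp_rw [cosSeries, ← tsum_mul_left, mul_left_comm (cos _)]
  rw [intervalIntegral_tsum_eq_tsum_intervalIntegral (fun _ => by fun_prop) hc hbound,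
    tsum_eq_single k]
  · rw [intervalIntegral.integral_const_mul, integral_cos_succ_mul_mul_cos_succ_mul, if_pos rfl,
      mul_comm]
  · intro j hj
    simp [integral_cos_succ_mul_mul_cos_succ_mul, Ne.symm hj]

theorem integral_cosSeries_mul_cosSeries (hb : Summable fun k => |b k|)
    (hc : Summable fun k => |c k|) :
    ∫ t in (-π)..π, cosSeries b t * cosSeries c t = π * ∑' k, b k * c k := by
  have hbound : ∀ k t, ‖b k * (cos ((k + 1) * t) * cosSeries c t)‖ ≤ |b k| * ∑' j, |c j| :=
    fun k t => by
      rw [norm_mul, norm_mul, norm_eq_abs]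
      gcongr
      exact (mul_le_mul (abs_cos_le_one _) (norm_cosSeries_le hc t) (norm_nonneg _)
        zero_le_one).trans_eq (one_mul _)
  have hcont := continuous_cosSeries hc
  have hseries : ∀ t, cosSeries b t * cosSeries c t =
      ∑' k, b k * (cos ((k + 1) * t) * cosSeries c t) := fun t => by
    rw [cosSeries, ← tsum_mul_right]
    simp only [mul_assoc]
  simp_rw [hseries]
  rw [intervalIntegral_tsum_eq_tsum_intervalIntegral (fun _ => by fun_prop)
    (hb.mul_right _) hbound, ← tsum_mul_left]
  simp only [intervalIntegral.integral_const_mul, integral_cos_succ_mul_mul_cosSeries hc]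
  congr 1 with k
  ring

theorem integral_add_cosSeries_mul_add_cosSeries (α β : ℝ) (hb : Summable fun k => |b k|)
    (hc : Summable fun k => |c k|) :
    ∫ t in (-π)..π, (α + cosSeries b t) * (β + cosSeries c t) =
      2 * π * α * β + π * ∑' k, b k * c k := by
  have hf := continuous_cosSeries hb
  have hg := continuous_cosSeries hc
  have hint : ∀ {F : ℝ → ℝ}, Continuous F → IntervalIntegrable F volume (-π) π :=
    fun hF => hF.intervalIntegrable _ _
  have hexpand : ∀ t, (α + cosSeries b t) * (β + cosSeries c t) =
      α * β + α * cosSeries c t + β * cosSeries b t + cosSeries b t * cosSeries c t :=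
    fun t => by ring
  simp_rw [hexpand]
  rw [intervalIntegral.integral_add (hint (by fun_prop)) (hint (by fun_prop)),
    intervalIntegral.integral_add (hint (by fun_prop)) (hint (by fun_prop)),
    intervalIntegral.integral_add (hint (by fun_prop)) (hint (by fun_prop))]
  simp only [intervalIntegral.integral_const_mul, intervalIntegral.integral_const, smul_eq_mul,
    integral_cosSeries hb, integral_cosSeries hc, integral_cosSeries_mul_cosSeries hb hc]
  ring

end CosSeries

theorem abs_one_add_pow_le_two {r : ℝ} (hr₀ : 0 ≤ r) (hr₁ : r ≤ 1) (n : ℕ) :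
    |1 + r ^ n| ≤ 2 := by
  have := pow_le_one₀ hr₀ hr₁ (n := n)
  rw [abs_of_nonneg (by linarith [pow_nonneg hr₀ n])]
  linarith

theorem abs_one_sub_pow_le_one {r : ℝ} (hr₀ : 0 ≤ r) (hr₁ : r ≤ 1) (n : ℕ) :
    |1 - r ^ n| ≤ 1 := by
  have := pow_le_one₀ hr₀ hr₁ (n := n)
  rw [abs_of_nonneg (by linarith)]
  linarith [pow_nonneg hr₀ n]

theorem summable_succ_mul_abs_mul_of_abs_le {u v : ℕ → ℝ} {M : ℝ}
    (hu : Summable fun k : ℕ => ((k : ℝ) + 1) * |u k|) (hv : ∀ k, |v k| ≤ M) :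
    Summable fun k : ℕ => ((k : ℝ) + 1) * |u k * v k| :=
  (hu.mul_right M).of_nonneg_of_le (fun _ => by positivity) fun k =>
    calc ((k : ℝ) + 1) * |u k * v k| = ((k : ℝ) + 1) * |u k| * |v k| := by rw [abs_mul, mul_assoc]
      _ ≤ ((k : ℝ) + 1) * |u k| * M := by gcongr; exact hv k

theorem summable_abs_of_summable_succ_mul_abs {u : ℕ → ℝ}
    (hu : Summable fun k : ℕ => ((k : ℝ) + 1) * |u k|) : Summable fun k => |u k| :=
  hu.of_nonneg_of_le (fun _ => abs_nonneg _) fun k =>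
    le_mul_of_one_le_left (abs_nonneg _) (by simp)

/-- **Zero-mean condition for the free-surface profile.** Let `r ∈ [0,1)`, `a₀ ∈ ℝ` and
`(a_k)_{k≥1}` with `Σ k|a_k| < ∞`. For the parametrisation
`x(t) = −t − Σ a_k (1+r^(2k)) sin(kt)`, `η(t) = −a₀ + Σ a_k (1−r^(2k)) cos(kt)`
of the free surface one has `x'(t) = −1 − Σ k a_k (1+r^(2k)) cos(kt)` and
`∫_{−π}^{π} η x' dt = 2π a₀ − π Σ k a_k² (1−r^(4k))`; in particular the integral vanishes
iff `a₀ = (1/2) Σ k a_k² (1−r^(4k))`. -/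
theorem zero_mean_condition (r : ℝ) (hr : r ∈ Set.Ico (0 : ℝ) 1)
    (a₀ : ℝ) (a : ℕ → ℝ)
    (ha : Summable (fun k : ℕ => ((k : ℝ) + 1) * |a (k + 1)|))
    (x η xd : ℝ → ℝ)
    (hx : ∀ t : ℝ, x t = -t - ∑' k : ℕ, a (k + 1) * (1 + r ^ (2 * (k + 1))) *
      Real.sin ((k + 1) * t))
    (hη : ∀ t : ℝ, η t = -a₀ + ∑' k : ℕ, a (k + 1) * (1 - r ^ (2 * (k + 1))) *
      Real.cos ((k + 1) * t))
    (hxd : ∀ t : ℝ, xd t = -1 - ∑' k : ℕ, ((k : ℝ) + 1) * a (k + 1) * (1 + r ^ (2 * (k + 1))) *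
      Real.cos ((k + 1) * t)) :
    (∀ t : ℝ, HasDerivAt x (xd t) t) ∧
    (∫ t in (-Real.pi)..Real.pi, η t * xd t) =
      2 * Real.pi * a₀ - Real.pi * ∑' k : ℕ, ((k : ℝ) + 1) * (a (k + 1)) ^ 2 *
        (1 - r ^ (4 * (k + 1))) ∧
    ((∫ t in (-Real.pi)..Real.pi, η t * xd t) = 0 ↔
      a₀ = (1 / 2) * ∑' k : ℕ, ((k : ℝ) + 1) * (a (k + 1)) ^ 2 * (1 - r ^ (4 * (k + 1)))) := by
  set A : ℕ → ℝ := fun k => a (k + 1) * (1 + r ^ (2 * (k + 1)))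
  set B : ℕ → ℝ := fun k => a (k + 1) * (1 - r ^ (2 * (k + 1)))
  set C : ℕ → ℝ := fun k => ((k : ℝ) + 1) * A k with hC_def
  have hA : Summable fun k : ℕ => ((k : ℝ) + 1) * |A k| :=
    summable_succ_mul_abs_mul_of_abs_le ha fun k => abs_one_add_pow_le_two hr.1 hr.2.le _
  have hB : Summable fun k => |B k| := summable_abs_of_summable_succ_mul_abs <|
    summable_succ_mul_abs_mul_of_abs_le ha fun k => abs_one_sub_pow_le_one hr.1 hr.2.le _
  have hC : Summable fun k => |(-C) k| := hA.congr fun k => by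
    simp only [hC_def, Pi.neg_apply, abs_neg, abs_mul,
      abs_of_nonneg (k.cast_add_one_pos (α := ℝ)).le]
  have hxd' : ∀ t, xd t = -1 - cosSeries C t := fun t => by
    rw [hxd, cosSeries]
    congr 1
    exact tsum_congr fun k => by ring
  have hderiv : ∀ t, HasDerivAt x (xd t) t := fun t => by
    rw [show x = fun s => -s - sinSeries A s from funext hx, hxd']
    exact (hasDerivAt_neg t).sub (hasDerivAt_sinSeries hA t)
  have hcoeff : ∑' k, B k * (-C) k =
      -∑' k : ℕ, ((k : ℝ) + 1) * (a (k + 1)) ^ 2 * (1 - r ^ (4 * (k + 1))) := by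
    rw [← tsum_neg]
    exact tsum_congr fun k => by simp only [A, B, C, Pi.neg_apply]; ring
  have hintegral : ∫ t in (-π)..π, η t * xd t =
      2 * π * a₀ - π * ∑' k : ℕ, ((k : ℝ) + 1) * (a (k + 1)) ^ 2 * (1 - r ^ (4 * (k + 1))) := by
    simp_rw [show ∀ t, η t = -a₀ + cosSeries B t from hη, hxd', sub_eq_add_neg (-1 : ℝ),
      ← cosSeries_neg]
    rw [integral_add_cosSeries_mul_add_cosSeries _ _ hB hC, hcoeff]
    ring
  refine ⟨hderiv, hintegral, ?_⟩
  rw [hintegral, show ∀ S, 2 * π * a₀ - π * S = 2 * π * (a₀ - 1 / 2 * S) from fun S => by ring,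
    mul_eq_zero, sub_eq_zero]
  simp [pi_ne_zero]
end
end
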